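/- Let z ∈ ℂ, let k be a positive integer with k ≥ e·|z|, and let λ(k) ∈ ℤ with m_k = k + ⌈max(0, log|λ(k)|)⌉. Then |Log E_{m_k}(z/k)| ≤ (3/2)·e^{−(m_k+1)}, and consequently |λ(k)|·|Log E_{m_k}(z/k)| ≤ (3/2)·e^{−(k+1)}. -/

import Mathlib

/-! For `‖w‖ < 1` we have `E_m(w) = exp ζ` with `ζ = log (1 - w) + ∑_{j ≤ m} w ^ j / j`. Since
`-log (1 - w) = ∑_j w ^ j / j`, `ζ` is minus the tail `∑_{j > m} w ^ j / j`, so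
`‖ζ‖ ≤ ‖w‖ ^ (m + 1) / ((m + 1)(1 - ‖w‖))`.
For `‖w‖ ≤ e⁻¹ < 1/2` and `m ≥ 1` this is at most `e^{-(m+1)} < π`, hence `Log E_m(w) = ζ`.
The second bound follows from `|λ| ≤ e^{m - k}`. -/

/-- The Weierstrass factor `E_m(z) = (1 - z) * exp(∑_{j=1}^m z^j / j)`. -/
noncomputable def weierstrassFactor (m : ℕ) (z : ℂ) : ℂ :=
  (1 - z) * Complex.exp (∑ j ∈ Finset.Icc 1 m, z ^ j / j)

open Complex Finset

lemma Complex.log_exp_of_norm_lt_pi {x : ℂ} (hx : ‖x‖ < Real.pi) : log (exp x) = x := by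
  obtain ⟨h₁, h₂⟩ := abs_lt.mp ((abs_im_le_norm x).trans_lt hx)
  exact log_exp h₁ h₂.le

lemma Complex.logTaylor_succ_neg (m : ℕ) (w : ℂ) :
    logTaylor (m + 1) (-w) = -∑ j ∈ Icc 1 m, w ^ j / j := by
  -- the `j = 0` term of `logTaylor` is `x / 0 = 0`
  rw [logTaylor, sum_range_succ', ← Ico_add_one_right_eq_Icc, sum_Ico_eq_sum_range]
  simp only [Nat.cast_zero, div_zero, add_zero, ← sum_neg_distrib, add_tsub_cancel_right]
  refine sum_congr rfl fun j _ => ?_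
  rw [add_comm 1 j]
  push_cast
  ring_nf
  simp [pow_mul']

lemma Complex.norm_log_one_sub_add_sum_le (m : ℕ) {w : ℂ} (hw : ‖w‖ < 1) :
    ‖log (1 - w) + ∑ j ∈ Icc 1 m, w ^ j / j‖ ≤ ‖w‖ ^ (m + 1) * (1 - ‖w‖)⁻¹ / (m + 1) := by
  have h := norm_log_sub_logTaylor_le m (z := -w) (by rwa [norm_neg])
  rwa [logTaylor_succ_neg, ← sub_eq_add_neg, sub_neg_eq_add, norm_neg] at h

lemma weierstrassFactor_eq_exp (m : ℕ) {w : ℂ} (hw : w ≠ 1) :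
    weierstrassFactor m w = exp (log (1 - w) + ∑ j ∈ Icc 1 m, w ^ j / j) := by
  rw [weierstrassFactor, exp_add, exp_log (sub_ne_zero.mpr hw.symm)]

lemma norm_log_weierstrassFactor_le (m : ℕ) {w : ℂ} (hw : ‖w‖ ≤ 1 / 2) :
    ‖log (weierstrassFactor m w)‖ ≤ 2 * ‖w‖ ^ (m + 1) / (m + 1) := by
  have hw1 : ‖w‖ < 1 := by linarith
  set ζ := log (1 - w) + ∑ j ∈ Icc 1 m, w ^ j / j
  have hζ : ‖ζ‖ ≤ 2 * ‖w‖ ^ (m + 1) / (m + 1) := by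
    refine (norm_log_one_sub_add_sum_le m hw1).trans ?_
    have hinv : (1 - ‖w‖)⁻¹ ≤ 2 := by rw [inv_le_comm₀ (by linarith) two_pos]; linarith
    rw [mul_comm 2]
    gcongr
  have hζπ : ‖ζ‖ < Real.pi := by
    have hpow : ‖w‖ ^ (m + 1) ≤ ‖w‖ := pow_le_of_le_one (norm_nonneg w) hw1.le m.succ_ne_zero
    have hbound : 2 * ‖w‖ ^ (m + 1) / (m + 1) ≤ 2 * ‖w‖ := by
      apply div_le_of_le_mul₀ (by positivity) (by positivity)
      nlinarith [mul_nonneg (norm_nonneg w) m.cast_nonneg]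
    linarith [Real.pi_gt_three]
  rwa [weierstrassFactor_eq_exp m (by rintro rfl; norm_num at hw), log_exp_of_norm_lt_pi hζπ]

lemma norm_log_weierstrassFactor_le_exp {m : ℕ} (hm : 1 ≤ m) {w : ℂ}
    (hw : ‖w‖ ≤ Real.exp (-1)) :
    ‖log (weierstrassFactor m w)‖ ≤ Real.exp (-((m : ℝ) + 1)) :=
  calc ‖log (weierstrassFactor m w)‖
      ≤ 2 * ‖w‖ ^ (m + 1) / (m + 1) :=
        norm_log_weierstrassFactor_le m (hw.trans Real.exp_neg_one_lt_half.le)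
    _ ≤ ‖w‖ ^ (m + 1) := by
        rw [div_le_iff₀ (by positivity), mul_comm]
        gcongr
        exact_mod_cast Nat.succ_le_succ hm
    _ ≤ Real.exp (-1) ^ (m + 1) := by gcongr
    _ = Real.exp (-((m : ℝ) + 1)) := by
        rw [← Real.exp_nat_mul]; push_cast; ring_nf

lemma Real.abs_le_exp_natCeil_max_zero_log (x : ℝ) :
    |x| ≤ Real.exp ⌈max 0 (Real.log |x|)⌉₊ :=
  (Real.le_exp_log |x|).trans <| Real.exp_le_exp.mpr <|
    (le_max_right _ _).trans (Nat.le_ceil _)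

theorem log_weierstrassFactor_bound (z : ℂ) (k : ℕ) (hk : 1 ≤ k)
    (hke : Real.exp 1 * ‖z‖ ≤ k) (l : ℤ) :
    ‖Complex.log (weierstrassFactor (k + ⌈max 0 (Real.log |(l : ℝ)|)⌉₊) (z / k))‖ ≤
      (3 / 2) * Real.exp (-(((k + ⌈max 0 (Real.log |(l : ℝ)|)⌉₊ : ℕ) : ℝ) + 1)) ∧
    |(l : ℝ)| * ‖Complex.log (weierstrassFactor
        (k + ⌈max 0 (Real.log |(l : ℝ)|)⌉₊) (z / k))‖ ≤
      (3 / 2) * Real.exp (-((k : ℝ) + 1)) := by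
  set c := ⌈max 0 (Real.log |(l : ℝ)|)⌉₊
  have hw : ‖z / k‖ ≤ Real.exp (-1) := by
    rw [norm_div, norm_natCast, div_le_iff₀ (Nat.cast_pos.mpr hk), Real.exp_neg, inv_mul_eq_div,
      le_div_iff₀ (Real.exp_pos 1), mul_comm]
    exact hke
  have hE := norm_log_weierstrassFactor_le_exp (hk.trans (k.le_add_right c)) hw
  have h32 (x : ℝ) : Real.exp x ≤ 3 / 2 * Real.exp x :=
    le_mul_of_one_le_left (Real.exp_pos x).le (by norm_num)
  refine ⟨hE.trans (h32 _), ?_⟩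
  calc |(l : ℝ)| * ‖log (weierstrassFactor (k + c) (z / k))‖
      ≤ Real.exp c * Real.exp (-(((k + c : ℕ) : ℝ) + 1)) := by
        gcongr
        exact Real.abs_le_exp_natCeil_max_zero_log l
    _ = Real.exp (-((k : ℝ) + 1)) := by rw [← Real.exp_add]; push_cast; ring_nf
    _ ≤ _ := h32 _
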